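/- arXiv:1404.2228 — 3 statements merged into one kernel-verified Lean document; each statement's English description precedes it below -/
import Mathlib

section
/- The function f_1(z) = (λ + μ + α)z − λz·β(z) − μ has exactly one zero in the open unit disk, where β(z) is a probability generating function of a positive-integer-valued random variable. -/
/-!
Write `G` for the generating function of the law of `X + 1`, so that `f₁(z) = c z - (λ G(z) + μ)`
with `c = λ + μ + α`. On `[0, 1]` the function `φ = λ G + μ - c·id` is convex with `φ 0 ≥ 0` and
`φ 1 = -α < 0`, so it has a root `x₀ ∈ [0, 1)` and is negative on `(x₀, 1]`. Since
`c ‖z‖ ≤ λ G ‖z‖ + μ` at every root `z` in the disk, all roots satisfy `‖z‖ ≤ x₀`. There the chord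
bound `(1 - r) ‖z ^ n - w ^ n‖ ≤ (1 - r ^ n) ‖z - w‖` makes the fixed-point map
`z ↦ (λ G z + μ) / c` a contraction, because `λ (1 - G x₀) = λ + μ - c x₀ < c (1 - x₀)`.
-/

open Set Metric

theorem norm_pow_sub_pow_le {R : Type*} [SeminormedRing R] [NormOneClass R] {z w : R} {r : ℝ}
    (hz : ‖z‖ ≤ r) (hw : ‖w‖ ≤ r) (hr : r ≤ 1) (n : ℕ) :
    (1 - r) * ‖z ^ n - w ^ n‖ ≤ (1 - r ^ n) * ‖z - w‖ := by
  have hr0 : 0 ≤ r := (norm_nonneg z).trans hz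
  induction n with
  | zero => simp
  | succ n ih =>
    have hwn : ‖w ^ n‖ ≤ r ^ n :=
      (norm_pow_le w n).trans (pow_le_pow_left₀ (norm_nonneg w) hw n)
    have hrn : r ^ n ≤ 1 := pow_le_one₀ hr0 hr
    have hstep : ‖z ^ (n + 1) - w ^ (n + 1)‖ ≤ r * ‖z ^ n - w ^ n‖ + ‖z - w‖ * r ^ n := by
      rw [pow_succ', pow_succ', show z * z ^ n - w * w ^ n = z * (z ^ n - w ^ n) + (z - w) * w ^ n by
        noncomm_ring]
      refine (norm_add_le _ _).trans (add_le_add ?_ ?_)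
      · exact (norm_mul_le _ _).trans (by gcongr)
      · exact (norm_mul_le _ _).trans (by gcongr)
    calc (1 - r) * ‖z ^ (n + 1) - w ^ (n + 1)‖
        ≤ (1 - r) * (r * ‖z ^ n - w ^ n‖ + ‖z - w‖ * r ^ n) := by gcongr
      _ ≤ r * ((1 - r ^ n) * ‖z - w‖) + (1 - r) * r ^ n * ‖z - w‖ := by nlinarith
      _ ≤ (1 - r ^ (n + 1)) * ‖z - w‖ := by
          rw [pow_succ]
          nlinarith [mul_nonneg (mul_nonneg (sub_nonneg.2 hr) (sub_nonneg.2 hrn))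
            (norm_nonneg (z - w))]

section Pgf

variable {𝕜 : Type*} [RCLike 𝕜] {p : ℕ → ℝ}

noncomputable def pgf (p : ℕ → ℝ) (z : 𝕜) : 𝕜 := ∑' n, p n • z ^ n

theorem norm_pgf_term_le (hp : ∀ n, 0 ≤ p n) {z : 𝕜} (hz : ‖z‖ ≤ 1) (n : ℕ) :
    ‖p n • z ^ n‖ ≤ p n := by
  rw [norm_smul, norm_pow, Real.norm_of_nonneg (hp n)]
  exact mul_le_of_le_one_right (hp n) (pow_le_one₀ (norm_nonneg z) hz)

theorem summable_pgf (hp : ∀ n, 0 ≤ p n) (hps : Summable p) {z : 𝕜} (hz : ‖z‖ ≤ 1) :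
    Summable fun n ↦ p n • z ^ n :=
  hps.of_norm_bounded (norm_pgf_term_le hp hz)

theorem pgf_ofReal (x : ℝ) : pgf p (x : 𝕜) = pgf p x := by
  simp only [pgf, RCLike.ofReal_tsum, RCLike.real_smul_eq_coe_mul, smul_eq_mul,
    RCLike.ofReal_mul, RCLike.ofReal_pow]

theorem pgf_one (hp1 : HasSum p 1) : pgf p (1 : ℝ) = 1 := by
  simpa [pgf] using hp1.tsum_eq

theorem pgf_nonneg (hp : ∀ n, 0 ≤ p n) {x : ℝ} (hx : 0 ≤ x) : 0 ≤ pgf p x :=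
  tsum_nonneg fun n ↦ smul_nonneg (hp n) (pow_nonneg hx n)

theorem norm_pgf_le (hp : ∀ n, 0 ≤ p n) (hps : Summable p) {z : 𝕜} (hz : ‖z‖ ≤ 1) :
    ‖pgf p z‖ ≤ pgf p ‖z‖ := by
  refine tsum_of_norm_bounded (summable_pgf hp hps (by simpa using hz)).hasSum fun n ↦ ?_
  rw [norm_smul, norm_pow, Real.norm_of_nonneg (hp n), smul_eq_mul]

theorem continuousOn_pgf (hp : ∀ n, 0 ≤ p n) (hps : Summable p) :
    ContinuousOn (pgf p : 𝕜 → 𝕜) (closedBall 0 1) :=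
  continuousOn_tsum (fun n ↦ (continuous_const.smul (continuous_pow n)).continuousOn) hps
    fun n _ hz ↦ norm_pgf_term_le hp (mem_closedBall_zero_iff.1 hz) n

theorem convexOn_pgf (hp : ∀ n, 0 ≤ p n) (hps : Summable p) :
    ConvexOn ℝ (Icc 0 1) (pgf p : ℝ → ℝ) := by
  refine ⟨convex_Icc 0 1, fun x hx y hy a b ha hb hab ↦ ?_⟩
  have hsum {t : ℝ} (ht : t ∈ Icc (0 : ℝ) 1) : Summable fun n ↦ p n • t ^ n :=
    summable_pgf hp hps (by rw [Real.norm_of_nonneg ht.1]; exact ht.2)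
  calc pgf p (a • x + b • y)
      ≤ ∑' n, (a • p n • x ^ n + b • p n • y ^ n) := by
        refine (hsum (convex_Icc 0 1 hx hy ha hb hab)).tsum_le_tsum (fun n ↦ ?_)
          (((hsum hx).const_smul a).add ((hsum hy).const_smul b))
        have := (convexOn_pow n).2 hx.1 hy.1 ha hb hab
        simp only [smul_eq_mul] at this ⊢
        nlinarith [hp n]
    _ = a • pgf p x + b • pgf p y := by
        rw [((hsum hx).const_smul a).tsum_add ((hsum hy).const_smul b), tsum_const_smul'',
          tsum_const_smul'']
        rfl

theorem norm_pgf_sub_pgf_le (hp : ∀ n, 0 ≤ p n) (hp1 : HasSum p 1) {z w : 𝕜} {r : ℝ}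
    (hz : ‖z‖ ≤ r) (hw : ‖w‖ ≤ r) (hr : r ≤ 1) :
    (1 - r) * ‖pgf p z - pgf p w‖ ≤ (1 - pgf p r) * ‖z - w‖ := by
  have hr0 : 0 ≤ r := (norm_nonneg z).trans hz
  have hsum {u : 𝕜} (hu : ‖u‖ ≤ r) := summable_pgf hp hp1.summable (hu.trans hr)
  have hpr : HasSum (fun n ↦ p n * r ^ n) (pgf p r) :=
    (summable_pgf hp hp1.summable (by rwa [Real.norm_of_nonneg hr0])).hasSum
  rw [← abs_of_nonneg (sub_nonneg.2 hr), ← Real.norm_eq_abs, ← norm_smul, pgf, pgf,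
    ← (hsum hz).tsum_sub (hsum hw), ← tsum_const_smul'']
  refine tsum_of_norm_bounded ((hp1.sub hpr).mul_right ‖z - w‖) fun n ↦ ?_
  calc ‖(1 - r) • (p n • z ^ n - p n • w ^ n)‖ = p n * ((1 - r) * ‖z ^ n - w ^ n‖) := by
        rw [← smul_sub, norm_smul, norm_smul, Real.norm_of_nonneg (hp n),
          Real.norm_of_nonneg (sub_nonneg.2 hr)]
        ring
    _ ≤ p n * ((1 - r ^ n) * ‖z - w‖) :=
        mul_le_mul_of_nonneg_left (norm_pow_sub_pow_le hz hw hr n) (hp n)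
    _ = (p n - p n * r ^ n) * ‖z - w‖ := by ring

def shiftDist (p : ℕ → ℝ) : ℕ → ℝ
  | 0 => 0
  | n + 1 => p n

theorem shiftDist_nonneg (hp : ∀ n, 0 ≤ p n) (n : ℕ) : 0 ≤ shiftDist p n := by
  cases n with
  | zero => exact le_rfl
  | succ n => exact hp n

theorem hasSum_shiftDist {s : ℝ} (hp : HasSum p s) : HasSum (shiftDist p) s :=
  (hasSum_nat_add_iff' 1).1 (by simpa [shiftDist] using hp)

theorem pgf_shiftDist {z : 𝕜} (hz : Summable fun n ↦ p n • z ^ n) :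
    pgf (shiftDist p) z = z * pgf p z := by
  have htail : (fun n ↦ shiftDist p (n + 1) • z ^ (n + 1)) = fun n ↦ z * (p n • z ^ n) := by
    ext n
    rw [pow_succ', mul_smul_comm, shiftDist]
  rw [pgf, tsum_eq_zero_add' (htail ▸ hz.mul_left z), htail, tsum_mul_left, pgf]
  simp [shiftDist]

variable {a m c : ℝ}

theorem exists_pgf_root_mem_Ico (hp : ∀ n, 0 ≤ p n) (hp1 : HasSum p 1) (ha : 0 ≤ a)
    (hm : 0 ≤ m) (hc : a + m < c) : ∃ x ∈ Ico (0 : ℝ) 1, c * x = a * pgf p x + m := by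
  have hcont : ContinuousOn (fun x ↦ a * pgf p x + m - c * x) (Icc 0 1) := by
    refine ((continuousOn_const.mul ?_).add continuousOn_const).sub
      (continuousOn_const.mul continuousOn_id)
    exact (continuousOn_pgf hp hp1.summable).mono
      (by rw [Real.closedBall_eq_Icc]; norm_num [Icc_subset_Icc])
  obtain ⟨x, hx, hφx⟩ : ∃ x ∈ Icc (0 : ℝ) 1, a * pgf p x + m - c * x = 0 := by
    refine intermediate_value_Icc' zero_le_one hcont ⟨?_, ?_⟩
    · simp only [pgf_one hp1]
      linarith
    · nlinarith [pgf_nonneg hp (le_refl (0 : ℝ))]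
  refine ⟨x, ⟨hx.1, hx.2.lt_of_ne ?_⟩, by linarith⟩
  rintro rfl
  rw [pgf_one hp1] at hφx
  linarith

theorem pgf_root_lt (hp : ∀ n, 0 ≤ p n) (hp1 : HasSum p 1) (ha : 0 ≤ a) (hc : a + m < c)
    {x y : ℝ} (hx : 0 ≤ x) (hxy : x < y) (hy : y ≤ 1) (hroot : c * x = a * pgf p x + m) :
    a * pgf p y + m < c * y := by
  have hφ : ConvexOn ℝ (Icc 0 1) fun t ↦ a * pgf p t + m - c * t :=
    (((convexOn_pgf hp hp1.summable).smul ha).add_const m).sub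
      ((LinearMap.mul ℝ ℝ c).concaveOn (convex_Icc 0 1))
  have := hφ.le_right_of_left_le'' ⟨hx, by linarith⟩ ⟨zero_le_one, le_rfl⟩ hxy hy
  simp only [pgf_one hp1] at this
  by_contra! h
  linarith [this (by linarith)]

theorem norm_le_of_pgf_root (hp : ∀ n, 0 ≤ p n) (hp1 : HasSum p 1) (ha : 0 ≤ a) (hm : 0 ≤ m)
    (hc : a + m < c) {x : ℝ} (hx : 0 ≤ x) (hroot : c * x = a * pgf p x + m) {z : 𝕜}
    (hz : ‖z‖ ≤ 1) (hzroot : (c : 𝕜) * z = a * pgf p z + m) : ‖z‖ ≤ x := by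
  by_contra! hxz
  have hnorm : c * ‖z‖ ≤ a * pgf p ‖z‖ + m :=
    calc c * ‖z‖ = ‖(c : 𝕜) * z‖ := by
          rw [norm_mul, RCLike.norm_ofReal, abs_of_nonneg (by linarith)]
      _ ≤ a * ‖pgf p z‖ + m := by
          rw [hzroot]
          refine (norm_add_le _ _).trans_eq ?_
          rw [norm_mul, RCLike.norm_ofReal, RCLike.norm_ofReal, abs_of_nonneg ha,
            abs_of_nonneg hm]
      _ ≤ a * pgf p ‖z‖ + m := by gcongr; exact norm_pgf_le hp hp1.summable hz
  exact (pgf_root_lt hp hp1 ha hc hx hxz hz hroot).not_ge hnorm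

theorem eq_of_pgf_roots (hp : ∀ n, 0 ≤ p n) (hp1 : HasSum p 1) (ha : 0 ≤ a) (hm : 0 ≤ m)
    (hc : a + m < c) {r : ℝ} (hr : r ≤ 1) (hroot : c * r = a * pgf p r + m) {z w : 𝕜} (hz : ‖z‖ ≤ r)
    (hw : ‖w‖ ≤ r) (hzroot : (c : 𝕜) * z = a * pgf p z + m)
    (hwroot : (c : 𝕜) * w = a * pgf p w + m) : z = w := by
  have hdiff : c * ‖z - w‖ = a * ‖pgf p z - pgf p w‖ := by
    have : (c : 𝕜) * (z - w) = a * (pgf p z - pgf p w) := by linear_combination hzroot - hwroot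
    simpa [norm_mul, abs_of_nonneg ha, abs_of_nonneg (show 0 ≤ c by linarith)] using
      congr_arg norm this
  have : c * (1 - r) * ‖z - w‖ ≤ (a + m - c * r) * ‖z - w‖ :=
    calc c * (1 - r) * ‖z - w‖ = a * ((1 - r) * ‖pgf p z - pgf p w‖) := by
          linear_combination (1 - r) * hdiff
      _ ≤ a * ((1 - pgf p r) * ‖z - w‖) :=
          mul_le_mul_of_nonneg_left (norm_pgf_sub_pgf_le hp hp1 hz hw hr) ha
      _ = (a + m - c * r) * ‖z - w‖ := by linear_combination ‖z - w‖ * hroot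
  have : (c - (a + m)) * ‖z - w‖ ≤ 0 := by linarith
  exact sub_eq_zero.1 (norm_le_zero_iff.1 (nonpos_of_mul_nonpos_right this (by linarith)))

theorem existsUnique_pgf_root (hp : ∀ n, 0 ≤ p n) (hp1 : HasSum p 1) (ha : 0 ≤ a)
    (hm : 0 ≤ m) (hc : a + m < c) :
    ∃! z : 𝕜, ‖z‖ < 1 ∧ (c : 𝕜) * z = a * pgf p z + m := by
  obtain ⟨x, ⟨hx0, hx1⟩, hroot⟩ := exists_pgf_root_mem_Ico hp hp1 ha hm hc
  have hxnorm : ‖(x : 𝕜)‖ = x := by rw [RCLike.norm_ofReal, abs_of_nonneg hx0]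
  have hbound {z : 𝕜} (hz : ‖z‖ < 1 ∧ (c : 𝕜) * z = a * pgf p z + m) : ‖z‖ ≤ x :=
    norm_le_of_pgf_root hp hp1 ha hm hc hx0 hroot hz.1.le hz.2
  refine ⟨x, ⟨hxnorm.trans_lt hx1, ?_⟩, fun z hz ↦ ?_⟩
  · rw [pgf_ofReal]
    exact_mod_cast hroot
  · exact eq_of_pgf_roots hp hp1 ha hm hc hx1.le hroot (hbound hz) hxnorm.le hz.2
      (by rw [pgf_ofReal]; exact_mod_cast hroot)

end Pgf

theorem stmt_0_general (lam mu alpha : ℝ) (hlam : 0 < lam) (hmu : 0 < mu) (halpha : 0 < alpha)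
    (b : ℕ → ℝ) (hb : ∀ i, 0 ≤ b i) (hbsummable : Summable b)
    (hbsum : ∑' i, b i = 1) :
    ∃! z : ℂ, ‖z‖ < 1 ∧
      (lam + mu + alpha) * z - lam * z * (∑' i : ℕ, (b i : ℂ) * z ^ i) - mu = 0 := by
  have hb1 : HasSum b 1 := hbsum ▸ hbsummable.hasSum
  refine (existsUnique_congr fun z ↦ and_congr_right fun hz ↦ ?_).1
    (existsUnique_pgf_root (shiftDist_nonneg hb) (hasSum_shiftDist hb1) hlam.le hmu.le
      (lt_add_of_pos_right (lam + mu) halpha))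
  rw [pgf_shiftDist (summable_pgf hb hbsummable hz.le), pgf]
  simp only [Complex.real_smul]
  push_cast
  constructor <;> intro h <;> linear_combination h

/-- The function `f₁(z) = (λ + μ + α)z − λ·z·β(z) − μ`, where `β` is the probability
generating function of a positive-integer-valued random variable, has exactly one zero
in the open unit disk. -/
theorem stmt_0 (lam mu alpha : ℝ) (hlam : 0 < lam) (hmu : 0 < mu) (halpha : 0 < alpha)
    (b : ℕ → ℝ) (hb : ∀ i, 0 ≤ b i) (hb0 : b 0 = 0) (hbsummable : Summable b)
    (hbsum : ∑' i, b i = 1) :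
    ∃! z : ℂ, ‖z‖ < 1 ∧
      (lam + mu + alpha) * z - lam * z * (∑' i : ℕ, (b i : ℂ) * z ^ i) - mu = 0 :=
  stmt_0_general lam mu alpha hlam hmu halpha b hb hbsummable hbsum
end

section
/- For the M/M/c staggered setup model with single arrivals, the functions Π_i(z) = π_{i,i}(λ+α)/(λ+α−λz) with π_{i,i} = π₀₀(λ/μ)^i/i!, for i = 0,…,c−1, satisfy the balance functional equation f_i(z)Π_i(z) = α_i z π_{i,i} + (i+1)μ z π_{i+1,i+1} − iμ π_{i,i} + α(Π_{i−1}(z) − π_{i−1,i−1}) where f_i(z) = (λ+iμ+α)z − λz² − iμ. -/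
open scoped Nat

theorem succ_mul_mul_poissonWeight_succ (p00 lam : ℝ) {mu : ℝ} (hmu : mu ≠ 0) (n : ℕ) :
    ((n : ℝ) + 1) * mu * (p00 * (lam / mu) ^ (n + 1) / (n + 1)!) =
      lam * (p00 * (lam / mu) ^ n / n !) := by
  rw [Nat.factorial_succ, pow_succ]
  push_cast
  field_simp

/-- With `D = λ + α − λz` one has `f_n(z) = zD + nμ(z − 1)`, and the two recurrences turn
`α(Π_{n−1} − π_{n−1})` into `nμ π_n αz / D`; both sides then agree after clearing `D`. -/
theorem balance_eq_of_recurrence {lam mu alpha n z a b d : ℝ} (hD : lam + alpha - lam * z ≠ 0)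
    (hab : lam * a = n * mu * b) (hbd : lam * b = (n + 1) * mu * d) :
    ((lam + n * mu + alpha) * z - lam * z ^ 2 - n * mu) *
        (b * (lam + alpha) / (lam + alpha - lam * z)) =
      alpha * z * b + (n + 1) * mu * z * d - n * mu * b +
        alpha * (a * (lam + alpha) / (lam + alpha - lam * z) - a) := by
  field_simp
  linear_combination (-(alpha * z)) * hab + (z * (lam + alpha - lam * z)) * hbd

theorem stmt_6_general (lam mu alpha p00 : ℝ) (hlam : 0 < lam) (hmu : 0 < mu) (halpha : 0 < alpha)
    (c : ℕ)
    (pii : ℕ → ℝ) (hpii : ∀ i, pii i = p00 * (lam / mu) ^ i / (Nat.factorial i))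
    (Pi : ℕ → ℝ → ℝ)
    (hPi : ∀ i ≤ c - 1, ∀ z : ℝ, Pi i z = pii i * (lam + alpha) / (lam + alpha - lam * z)) :
    ∀ i : ℕ, 1 ≤ i → i ≤ c - 1 → ∀ z : ℝ, |z| < 1 →
      ((lam + i * mu + alpha) * z - lam * z ^ 2 - i * mu) * Pi i z =
        alpha * z * pii i + (i + 1) * mu * z * pii (i + 1) - i * mu * pii i +
          alpha * (Pi (i - 1) z - pii (i - 1)) := by
  intro i hi1 hic z hz
  obtain ⟨j, rfl⟩ : ∃ j, i = j + 1 := ⟨i - 1, by omega⟩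
  have hD : 0 < lam + alpha - lam * z := by
    have : lam * z < lam := mul_lt_of_lt_one_right hlam (abs_lt.mp hz).2
    linarith
  rw [hPi _ hic, Nat.add_sub_cancel, hPi j (by omega)]
  refine balance_eq_of_recurrence hD.ne' ?_ ?_
  · rw [hpii, hpii, ← succ_mul_mul_poissonWeight_succ p00 lam hmu.ne' j]
    push_cast
    ring
  · rw [hpii, hpii, ← succ_mul_mul_poissonWeight_succ p00 lam hmu.ne' (j + 1)]

/-- For the M/M/c staggered setup model with single arrivals, the functions
`Π_i(z) = π_{i,i}(λ+α)/(λ+α−λz)` with `π_{i,i} = π₀₀(λ/μ)^i/i!` satisfy the balance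
functional equation of level `i` for `1 ≤ i ≤ c−1`. -/
theorem stmt_6 (lam mu alpha p00 : ℝ) (hlam : 0 < lam) (hmu : 0 < mu) (halpha : 0 < alpha)
    (hp00 : 0 < p00) (c : ℕ) (hc : 2 ≤ c)
    (pii : ℕ → ℝ) (hpii : ∀ i, pii i = p00 * (lam / mu) ^ i / (Nat.factorial i))
    (Pi : ℕ → ℝ → ℝ)
    (hPi : ∀ i ≤ c - 1, ∀ z : ℝ, Pi i z = pii i * (lam + alpha) / (lam + alpha - lam * z)) :
    ∀ i : ℕ, 1 ≤ i → i ≤ c - 1 → ∀ z : ℝ, |z| < 1 →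
      ((lam + i * mu + alpha) * z - lam * z ^ 2 - i * mu) * Pi i z =
        alpha * z * pii i + (i + 1) * mu * z * pii (i + 1) - i * mu * pii i +
          alpha * (Pi (i - 1) z - pii (i - 1)) :=
  stmt_6_general lam mu alpha p00 hlam hmu halpha c pii hpii Pi hPi
end

section
/- M/M/c decomposition with staggered setup: with Π_i(z) = π_{i,i}(λ+α)/(λ+α−λz) for i ≤ c−1 and Π_c(z) = π_{c,c}(λ+α)/((1−ρz)(λ+α−λz)), π_{i,i} = π₀₀(λ/μ)^i/i!, and the normalization Σ_{i=0}^c Π_i(1) = 1, the total generating function satisfies Σ_{i=0}^c Π_i(z) = [α/(α+λ−λz)]·[1 − C + C(1−ρ)/(1−ρz)] where ρ = λ/(cμ) and C = Π_c(1) is the Erlang-C waiting probability. -/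
/-!
The first `c` of the `Π_i` share the factor `(λ+α)/(λ+α−λz)`,
so their sum is `S·(λ+α)/(λ+α−λz)` with `S = Σ_{i<c} π_{i,i}`, and the normalization at `z = 1`
reads `S·(λ+α)/α = 1 − C`. Substituting this and `π_{c,c}(λ+α) = C(1−ρ)α` into the sum
at `z` and pulling out `α/(α+λ−λz)` gives the claim.
-/

open Finset

lemma mul_div_add_div_eq_of_normalized {S A a B r w q C : ℝ} (ha : a ≠ 0) (hr : r ≠ 1)
    (hC : C = q / ((1 - r) * a)) (hnorm : S * (A / a) + C = 1) :
    S * (A / B) + q / ((1 - r * w) * B) = a / B * (1 - C + C * (1 - r) / (1 - r * w)) := by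
  have hr' : 1 - r ≠ 0 := sub_ne_zero.mpr hr.symm
  rw [show 1 - C = S * (A / a) by linarith, hC]
  field_simp

theorem stmt_11_general (lam alpha : ℝ) (halpha : 0 < alpha)
    (c : ℕ) (rho : ℝ)
    (hrho1 : rho < 1)
    (pii : ℕ → ℝ)
    (Pi : ℕ → ℝ → ℝ)
    (hPilt : ∀ i < c, ∀ z : ℝ, Pi i z = pii i * (lam + alpha) / (lam + alpha - lam * z))
    (hPic : ∀ z : ℝ, Pi c z = pii c * (lam + alpha) / ((1 - rho * z) * (lam + alpha - lam * z)))
    (hnorm : ∑ i ∈ Finset.range (c + 1), Pi i 1 = 1) :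
    ∀ z : ℝ, |z| < 1 →
      ∑ i ∈ Finset.range (c + 1), Pi i z =
        (alpha / (alpha + lam - lam * z)) *
          (1 - Pi c 1 + Pi c 1 * (1 - rho) / (1 - rho * z)) := by
  intro z _
  have hsum (w : ℝ) : ∑ i ∈ range c, Pi i w
      = (∑ i ∈ range c, pii i) * ((lam + alpha) / (lam + alpha - lam * w)) := by
    rw [sum_mul]
    exact sum_congr rfl fun i hi => (hPilt i (mem_range.mp hi) w).trans (mul_div_assoc _ _ _)
  have hat_one : lam + alpha - lam * 1 = alpha := by ring
  rw [sum_range_succ, hsum, hat_one] at hnorm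
  rw [sum_range_succ, hsum, hPic z, show lam + alpha - lam * z = alpha + lam - lam * z by ring]
  exact mul_div_add_div_eq_of_normalized halpha.ne' hrho1.ne (by rw [hPic 1, hat_one, mul_one]) hnorm

/-- M/M/c decomposition with staggered setup: with `Π_i(z) = π_{i,i}(λ+α)/(λ+α−λz)` for
`i ≤ c−1`, `Π_c(z) = π_{c,c}(λ+α)/((1−ρz)(λ+α−λz))`, `π_{i,i} = π₀₀(λ/μ)^i/i!`, and the
normalization `Σ_{i=0}^c Π_i(1) = 1`, one has
`Σ_{i=0}^c Π_i(z) = (α/(α+λ−λz))·(1 − C + C(1−ρ)/(1−ρz))` where `C = Π_c(1)`. -/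
theorem stmt_11 (lam mu alpha p00 : ℝ) (hlam : 0 < lam) (hmu : 0 < mu) (halpha : 0 < alpha)
    (hp00 : 0 < p00) (c : ℕ) (hc : 1 ≤ c) (rho : ℝ) (hrho : rho = lam / (c * mu))
    (hrho1 : rho < 1)
    (pii : ℕ → ℝ) (hpii : ∀ i, pii i = p00 * (lam / mu) ^ i / (Nat.factorial i))
    (Pi : ℕ → ℝ → ℝ)
    (hPilt : ∀ i < c, ∀ z : ℝ, Pi i z = pii i * (lam + alpha) / (lam + alpha - lam * z))
    (hPic : ∀ z : ℝ, Pi c z = pii c * (lam + alpha) / ((1 - rho * z) * (lam + alpha - lam * z)))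
    (hnorm : ∑ i ∈ Finset.range (c + 1), Pi i 1 = 1) :
    ∀ z : ℝ, |z| < 1 →
      ∑ i ∈ Finset.range (c + 1), Pi i z =
        (alpha / (alpha + lam - lam * z)) *
          (1 - Pi c 1 + Pi c 1 * (1 - rho) / (1 - rho * z)) :=
  stmt_11_general lam alpha halpha c rho hrho1 pii Pi hPilt hPic hnorm
end
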